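/- arXiv:1708.05904 — 2 statements merged into one kernel-verified Lean document; each statement's English description precedes it below -/
import Mathlib

section
/- Let (C, ≤) and (A, ⊑) be complete lattices connected by a Galois connection (α, γ) where α preserves joins, let F : C → C and F♯ : A → A be monotone, and suppose F♯ is complete with respect to F, i.e., F♯(α(c)) ⊑ α(F(c)) for all c ∈ C. Then for every c₀ ∈ C, lfp(λ x, α(c₀) ⊔ F♯(x)) ⊑ α(lfp(λ x, c₀ ⊔ F(x))). -/
/-- Completeness of abstract interpretation: if `α` preserves joins and the abstract
transformer `Fs` is complete w.r.t. the concrete transformer `F`, then the abstract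
least fixpoint is below the abstraction of the concrete least fixpoint. -/
theorem stmt6 {C A : Type*} [CompleteLattice C] [CompleteLattice A]
    (α : C → A) (γ : A → C) (gc : GaloisConnection α γ)
    (hjoin : ∀ s : Set C, α (sSup s) = ⨆ c ∈ s, α c)
    (F : C → C) (Fs : A → A) (hF : Monotone F) (hFs : Monotone Fs)
    (complete : ∀ c, Fs (α c) ≤ α (F c)) (c₀ : C) :
    OrderHom.lfp ⟨fun x => α c₀ ⊔ Fs x, fun _ _ h => sup_le_sup_left (hFs h) (α c₀)⟩ ≤
      α (OrderHom.lfp ⟨fun x => c₀ ⊔ F x, fun _ _ h => sup_le_sup_left (hF h) c₀⟩) := by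
  set G : C →o C := ⟨fun x => c₀ ⊔ F x, fun _ _ h => sup_le_sup_left (hF h) c₀⟩
  have hfix : c₀ ⊔ F (OrderHom.lfp G) = OrderHom.lfp G := OrderHom.map_lfp G
  apply OrderHom.lfp_le
  have h1 : α c₀ ≤ α (OrderHom.lfp G) :=
    gc.monotone_l (le_trans le_sup_left hfix.le)
  have h2 : Fs (α (OrderHom.lfp G)) ≤ α (OrderHom.lfp G) :=
    le_trans (complete _) (gc.monotone_l (le_trans le_sup_right hfix.le))
  exact sup_le h1 h2
end

section
/- Let φ be a propositional formula over variables x₁, …, xₙ. Consider the transition system whose states are pairs of functions (O, V) : Fin n → Bool × Fin n → Bool, starting from (O, V) = (const false, const false), with input alphabet {(i, b) | i ∈ Fin n, b ∈ Bool} and transitions: on input (i, b), if O(i) = false then set O(i) := true and V(i) := b, otherwise leave the state unchanged; the system aborts (reaches error) in any state where evaluating φ under the assignment i ↦ (O(i) ∧ V(i)) yields true. Then the error state is reachable if and only if there exists a : Fin n → Bool with eval(φ, a) = true. -/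
/-- Propositional formulas over `n` variables. -/
inductive PropForm (n : ℕ)
  | var : Fin n → PropForm n
  | not : PropForm n → PropForm n
  | and : PropForm n → PropForm n → PropForm n
  | or : PropForm n → PropForm n → PropForm n

/-- Standard Boolean evaluation of a propositional formula under an assignment. -/
def PropForm.eval {n : ℕ} : PropForm n → (Fin n → Bool) → Bool
  | var i, a => a i
  | not φ, a => !(φ.eval a)
  | and φ ψ, a => φ.eval a && ψ.eval a
  | or φ ψ, a => φ.eval a || ψ.eval a

/-- One step of the coNP-hardness gadget middlebox: on input (i, b), record the
polarity b for variable i if it has not been seen before. -/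
def satStep {n : ℕ} (σ : (Fin n → Bool) × (Fin n → Bool)) (i : Fin n × Bool) :
    (Fin n → Bool) × (Fin n → Bool) :=
  if σ.1 i.1 then σ else (Function.update σ.1 i.1 true, Function.update σ.2 i.1 i.2)

/-- State of the gadget after processing a list of inputs from the all-false state. -/
def satRun {n : ℕ} (l : List (Fin n × Bool)) : (Fin n → Bool) × (Fin n → Bool) :=
  l.foldl satStep (fun _ => false, fun _ => false)

lemma satFold_pres {n : ℕ} (L : List (Fin n × Bool)) :
    ∀ (σ : (Fin n → Bool) × (Fin n → Bool)) (i : Fin n), σ.1 i = true →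
      (L.foldl satStep σ).1 i = true ∧ (L.foldl satStep σ).2 i = σ.2 i := by
  induction L with
  | nil => intro σ i h; exact ⟨h, rfl⟩
  | cons p t ih =>
    intro σ i h
    simp only [List.foldl_cons]
    by_cases hs : σ.1 p.1 = true
    · have hst : satStep σ p = σ := by simp [satStep, hs]
      rw [hst]; exact ih σ i h
    · have hne : p.1 ≠ i := fun he => hs (he ▸ h)
      have hst : satStep σ p = (Function.update σ.1 p.1 true, Function.update σ.2 p.1 p.2) := by
        simp [satStep, hs]
      rw [hst]
      have h1 : (Function.update σ.1 p.1 true, Function.update σ.2 p.1 p.2).1 i = true := by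
        simp [Function.update_of_ne (Ne.symm hne), h]
      obtain ⟨a1, a2⟩ := ih _ i h1
      refine ⟨a1, ?_⟩
      rw [a2]; simp [Function.update_of_ne (Ne.symm hne)]

lemma satFold_set {n : ℕ} (a : Fin n → Bool) (l : List (Fin n)) :
    ∀ (σ : (Fin n → Bool) × (Fin n → Bool)) (i : Fin n), i ∈ l → σ.1 i = false →
      ((l.map (fun j => (j, a j))).foldl satStep σ).1 i = true ∧
      ((l.map (fun j => (j, a j))).foldl satStep σ).2 i = a i := by
  induction l with
  | nil => intro σ i h; simp at h
  | cons j t ih =>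
    intro σ i hmem hσ
    simp only [List.map_cons, List.foldl_cons]
    rcases eq_or_ne i j with rfl | hne
    · have hstep : satStep σ (i, a i) =
        (Function.update σ.1 i true, Function.update σ.2 i (a i)) := by
        simp [satStep, hσ]
      rw [hstep]
      have := satFold_pres (t.map (fun j => (j, a j)))
        (Function.update σ.1 i true, Function.update σ.2 i (a i)) i (by simp)
      simpa using this
    · have hmem' : i ∈ t := by
        rcases List.mem_cons.mp hmem with h | h
        · exact absurd h hne
        · exact h
      by_cases hs : σ.1 j = true
      · have hst : satStep σ (j, a j) = σ := by simp [satStep, hs]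
        rw [hst]; exact ih σ i hmem' hσ
      · have hst : satStep σ (j, a j) =
            (Function.update σ.1 j true, Function.update σ.2 j (a j)) := by
          simp [satStep, hs]
        rw [hst]
        apply ih _ i hmem'
        simp [Function.update_of_ne hne, hσ]

/-- The error (abort) state of the gadget is reachable iff `φ` is satisfiable. -/
theorem stmt15 {n : ℕ} (φ : PropForm n) :
    (∃ l : List (Fin n × Bool),
      φ.eval (fun i => (satRun l).1 i && (satRun l).2 i) = true) ↔
    (∃ a : Fin n → Bool, φ.eval a = true) := by
  constructor
  · rintro ⟨l, hl⟩
    exact ⟨_, hl⟩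
  · rintro ⟨a, ha⟩
    refine ⟨(List.finRange n).map (fun j => (j, a j)), ?_⟩
    have key : ∀ i : Fin n,
        (satRun ((List.finRange n).map (fun j => (j, a j)))).1 i = true ∧
        (satRun ((List.finRange n).map (fun j => (j, a j)))).2 i = a i := by
      intro i
      exact satFold_set a (List.finRange n) _ i (List.mem_finRange i) rfl
    have : (fun i => (satRun ((List.finRange n).map (fun j => (j, a j)))).1 i &&
        (satRun ((List.finRange n).map (fun j => (j, a j)))).2 i) = a := by
      funext i
      rw [(key i).1, (key i).2]; simp
    rw [this]; exact ha
end
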